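/- arXiv:2603.07323 — 2 statements merged into one kernel-verified Lean document; each statement's English description precedes it below -/
import Mathlib

section
/- (Escape-time upper bound.) Under the shortcut-manifold update with conditional noise bound, let V_sc ≥ V_st > 0 with E[V_0] ≤ V_sc and suppose the noise floor satisfies η σ² / λ ≤ V_st / 2. Then for every natural number T with T ≥ log(2 V_sc / V_st) / (ηλ), one has E[V_T] ≤ V_st. In particular the escape time is at most ⌈(ηλ)^{-1} log(2 V_sc / V_st)⌉. -/
/-!
Since `E[ξ_t | 𝓕_t] = 0` and `θ_t` is bounded and `𝓕_t`-measurable, the cross term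
`E⟪θ_t, ξ_t⟫` vanishes, so
`E V_{t+1} = (1 - 2ηλ)² E V_t + η² E‖ξ_t‖² ≤ (1 - ηλ) E V_t + ηλ · ησ²/λ`.
Unrolling, `E V_T ≤ (1 - ηλ)^T V_sc + ησ²/λ`, and `(1 - ηλ)^T ≤ exp (-ηλT) ≤ V_st / (2 V_sc)`
once `T ≥ log (2 V_sc / V_st) / (ηλ)`.
-/

open MeasureTheory
open scoped RealInnerProductSpace

section
variable {Ω E : Type*} [NormedAddCommGroup E] [InnerProductSpace ℝ E]
  {m m0 : MeasurableSpace Ω} {μ : Measure Ω}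

theorem integrable_inner_of_bdd_left {X ξ : Ω → E} (C : ℝ) (hX : AEStronglyMeasurable X μ)
    (hXC : ∀ ω, ‖X ω‖ ≤ C) (hξ : Integrable ξ μ) :
    Integrable (fun ω => ⟪X ω, ξ ω⟫) μ :=
  (innerSL ℝ (E := E)).integrable_of_bilin_of_bdd_left C hX (ae_of_all _ hXC) hξ

variable [CompleteSpace E]

theorem integral_inner_eq_zero_of_condExp_eq_zero [IsFiniteMeasure μ] (hm : m ≤ m0)
    {X ξ : Ω → E}(hX : StronglyMeasurable[m] X) (C : ℝ) (hXC : ∀ ω, ‖X ω‖ ≤ C)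
    (hξ : Integrable ξ μ) (hξ0 : μ[ξ | m] =ᵐ[μ] 0) :
    ∫ ω, ⟪X ω, ξ ω⟫ ∂μ = 0 := by
  have hpull : μ[fun ω => ⟪X ω, ξ ω⟫ | m] =ᵐ[μ] fun ω => ⟪X ω, (μ[ξ | m]) ω⟫ :=
    condExp_bilin_of_aestronglyMeasurable_left (innerSL ℝ) hX.aestronglyMeasurable
      (integrable_inner_of_bdd_left C (hX.mono hm).aestronglyMeasurable hXC hξ) hξ
  calc ∫ ω, ⟪X ω, ξ ω⟫ ∂μ = ∫ ω, (μ[fun ω => ⟪X ω, ξ ω⟫ | m]) ω ∂μ :=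
        (integral_condExp hm).symm
    _ = ∫ _ω, (0 : ℝ) ∂μ := by
        refine integral_congr_ae (hpull.trans ?_)
        filter_upwards [hξ0] with ω hω
        simp [hω]
    _ = 0 := integral_zero _ _

theorem integral_norm_smul_add_smul_sq_of_condExp_eq_zero [IsFiniteMeasure μ] (hm : m ≤ m0)
    {X ξ : Ω → E} (hX : StronglyMeasurable[m] X) (C : ℝ) (hXC : ∀ ω, ‖X ω‖ ≤ C) (hξ : MemLp ξ 2 μ)
    (hξ0 : μ[ξ | m] =ᵐ[μ] 0) (a b : ℝ) :
    ∫ ω, ‖a • X ω + b • ξ ω‖ ^ 2 ∂μ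
      = a ^ 2 * ∫ ω, ‖X ω‖ ^ 2 ∂μ + b ^ 2 * ∫ ω, ‖ξ ω‖ ^ 2 ∂μ := by
  have hXm : AEStronglyMeasurable X μ := (hX.mono hm).aestronglyMeasurable
  have hξ1 : Integrable ξ μ := hξ.integrable one_le_two
  have iX : Integrable (fun ω => ‖X ω‖ ^ 2) μ :=
    (MemLp.of_bound hXm C (ae_of_all _ hXC) : MemLp X 2 μ).integrable_norm_pow two_ne_zero
  have iξ : Integrable (fun ω => ‖ξ ω‖ ^ 2) μ := hξ.integrable_norm_pow two_ne_zero
  have iXξ := integrable_inner_of_bdd_left C hXm hXC hξ1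
  have hexpand : ∀ ω, ‖a • X ω + b • ξ ω‖ ^ 2
      = a ^ 2 * ‖X ω‖ ^ 2 + 2 * (a * b) * ⟪X ω, ξ ω⟫ + b ^ 2 * ‖ξ ω‖ ^ 2 := fun ω => by
    rw [norm_add_sq_real, norm_smul, norm_smul, real_inner_smul_left, real_inner_smul_right,
      mul_pow, mul_pow, Real.norm_eq_abs, Real.norm_eq_abs, sq_abs, sq_abs]
    ring
  simp_rw [hexpand]
  rw [integral_add, integral_add, integral_const_mul, integral_const_mul, integral_const_mul,
    integral_inner_eq_zero_of_condExp_eq_zero hm hX C hXC hξ1 hξ0]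
  · ring
  exacts [iX.const_mul _, iXξ.const_mul _, (iX.const_mul _).add (iXξ.const_mul _),
    iξ.const_mul _]

theorem integral_le_of_ae_condExp_le [IsProbabilityMeasure μ] (hm : m ≤ m0) {f : Ω → ℝ} {s : ℝ}
    (hf : ∀ᵐ ω ∂μ, (μ[f | m]) ω ≤ s) :
    ∫ ω, f ω ∂μ ≤ s := by
  rw [← integral_condExp hm]
  simpa using integral_mono_ae integrable_condExp (integrable_const s) hf

theorem integral_norm_sq_contract_add_noise_le [IsProbabilityMeasure μ] (hm : m ≤ m0)
    {X ξ : Ω → E} (hX : StronglyMeasurable[m] X) (C : ℝ) (hXC : ∀ ω, ‖X ω‖ ≤ C)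
    (hξ : MemLp ξ 2 μ) (hξ0 : μ[ξ | m] =ᵐ[μ] 0) {s : ℝ}
    (hξs : ∀ᵐ ω ∂μ, (μ[fun ω => ‖ξ ω‖ ^ 2 | m]) ω ≤ s) {a : ℝ} (ha0 : 0 ≤ a) (ha1 : a ≤ 3 / 4)
    (b : ℝ) :
    ∫ ω, ‖(1 - 2 * a) • X ω + b • ξ ω‖ ^ 2 ∂μ ≤ (1 - a) * ∫ ω, ‖X ω‖ ^ 2 ∂μ + b ^ 2 * s := by
  rw [integral_norm_smul_add_smul_sq_of_condExp_eq_zero hm hX C hXC hξ hξ0]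
  have hcontract : (1 - 2 * a) ^ 2 ≤ 1 - a := by nlinarith
  gcongr
  exact integral_le_of_ae_condExp_le hm hξs

end

theorem le_one_sub_pow_mul_add_of_le {v : ℕ → ℝ} {a F : ℝ} (ha : a ≤ 1) (hF : 0 ≤ F)
    (hv : ∀ t, v (t + 1) ≤ (1 - a) * v t + a * F) (t : ℕ) :
    v t ≤ (1 - a) ^ t * v 0 + F := by
  induction t with
  | zero => simpa using hF
  | succ t ih =>
    calc v (t + 1) ≤ (1 - a) * ((1 - a) ^ t * v 0 + F) + a * F :=
          (hv t).trans (by gcongr)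
      _ = (1 - a) ^ (t + 1) * v 0 + F := by ring

theorem one_sub_pow_le_inv_of_log_div_le {a x : ℝ} {T : ℕ} (ha0 : 0 < a) (ha1 : a ≤ 1)
    (hx : 0 < x) (hT : Real.log x / a ≤ T) :
    (1 - a) ^ T ≤ x⁻¹ :=
  have hlog : Real.log x ≤ a * T := by rw [div_le_iff₀ ha0] at hT; linarith
  calc (1 - a) ^ T ≤ Real.exp (-a) ^ T :=
        pow_le_pow_left₀ (by linarith) (by linarith [Real.add_one_le_exp (-a)]) T
    _ = Real.exp (-(a * T)) := by rw [← Real.exp_nat_mul]; ring_nf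
    _ ≤ Real.exp (-Real.log x) := by gcongr
    _ = x⁻¹ := by rw [Real.exp_neg, Real.exp_log hx]

theorem stmt5_general {Ω : Type*} {m0 : MeasurableSpace Ω} {μ : Measure Ω} [IsProbabilityMeasure μ]
    (ℱ : Filtration ℕ m0) {d : ℕ}
    (θ ξ : ℕ → Ω → EuclideanSpace ℝ (Fin d))
    (hθ : Adapted ℱ θ) (hθb : ∀ t, ∃ C : ℝ, ∀ ω, ‖θ t ω‖ ≤ C)
    (hξ : ∀ t, MemLp (ξ t) 2 μ) (hξ0 : ∀ t, μ[ξ t | ℱ t] =ᵐ[μ] 0)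
    (η lam σ : ℝ) (hη : 0 < η) (hlam : 0 < lam)
    (hηlam : 0 < η * lam ∧ η * lam ≤ 1 / 2)
    (hξσ : ∀ t, ∀ᵐ ω ∂μ, (μ[(fun ω => ‖ξ t ω‖ ^ 2) | ℱ t]) ω ≤ σ ^ 2)
    (hupd : ∀ t, θ (t + 1) = fun ω => (1 - 2 * η * lam) • θ t ω + η • ξ t ω)
    (Vsc Vst : ℝ) (hV : Vst ≤ Vsc) (hVst : 0 < Vst)
    (hV0 : ∫ ω, ‖θ 0 ω‖ ^ 2 ∂μ ≤ Vsc)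
    (hfloor : η * σ ^ 2 / lam ≤ Vst / 2) :
    ∀ T : ℕ, (T : ℝ) ≥ Real.log (2 * Vsc / Vst) / (η * lam) →
      ∫ ω, ‖θ T ω‖ ^ 2 ∂μ ≤ Vst := by
  intro T hT
  obtain ⟨ha0, ha1⟩ := hηlam
  have hstep : ∀ t, ∫ ω, ‖θ (t + 1) ω‖ ^ 2 ∂μ
      ≤ (1 - η * lam) * ∫ ω, ‖θ t ω‖ ^ 2 ∂μ + η * lam * (η * σ ^ 2 / lam) := fun t => by
    obtain ⟨C, hC⟩ := hθb t
    calc ∫ ω, ‖θ (t + 1) ω‖ ^ 2 ∂μ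
        = ∫ ω, ‖(1 - 2 * (η * lam)) • θ t ω + η • ξ t ω‖ ^ 2 ∂μ := by rw [hupd t, mul_assoc]
      _ ≤ (1 - η * lam) * ∫ ω, ‖θ t ω‖ ^ 2 ∂μ + η ^ 2 * σ ^ 2 :=
        integral_norm_sq_contract_add_noise_le (ℱ.le t) (hθ t).stronglyMeasurable C hC (hξ t)
          (hξ0 t) (hξσ t) ha0.le (by linarith) η
      _ = (1 - η * lam) * ∫ ω, ‖θ t ω‖ ^ 2 ∂μ + η * lam * (η * σ ^ 2 / lam) := by
        field_simp
  have hunroll := le_one_sub_pow_mul_add_of_le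
    (v := fun t => ∫ ω, ‖θ t ω‖ ^ 2 ∂μ) (by linarith) (by positivity) hstep T
  have hVsc : 0 < Vsc := hVst.trans_le hV
  have hpow := one_sub_pow_le_inv_of_log_div_le ha0 (by linarith) (by positivity) hT
  have hdecay : (1 - η * lam) ^ T * ∫ ω, ‖θ 0 ω‖ ^ 2 ∂μ ≤ Vst / 2 :=
    calc (1 - η * lam) ^ T * ∫ ω, ‖θ 0 ω‖ ^ 2 ∂μ ≤ (2 * Vsc / Vst)⁻¹ * Vsc := by
          gcongr
      _ = Vst / 2 := by field_simp
  linarith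

/-- Escape-time upper bound: under the shortcut-manifold update with conditional noise bound,
if `E[V_0] ≤ V_sc`, `V_sc ≥ V_st > 0`, and the noise floor satisfies `ησ²/λ ≤ V_st/2`, then
for every `T ≥ log(2 V_sc / V_st) / (ηλ)` one has `E[V_T] ≤ V_st`. -/
theorem stmt5 {Ω : Type*} {m0 : MeasurableSpace Ω} {μ : Measure Ω} [IsProbabilityMeasure μ]
    (ℱ : Filtration ℕ m0) {d : ℕ}
    (θ ξ : ℕ → Ω → EuclideanSpace ℝ (Fin d))
    (hθ : Adapted ℱ θ) (hθb : ∀ t, ∃ C : ℝ, ∀ ω, ‖θ t ω‖ ≤ C)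
    (hξ : ∀ t, MemLp (ξ t) 2 μ) (hξ0 : ∀ t, μ[ξ t | ℱ t] =ᵐ[μ] 0)
    (η lam σ : ℝ) (hη : 0 < η) (hlam : 0 < lam)
    (hηlam : 0 < η * lam ∧ η * lam ≤ 1 / 2) (hσ : 0 ≤ σ)
    (hξσ : ∀ t, ∀ᵐ ω ∂μ, (μ[(fun ω => ‖ξ t ω‖ ^ 2) | ℱ t]) ω ≤ σ ^ 2)
    (hupd : ∀ t, θ (t + 1) = fun ω => (1 - 2 * η * lam) • θ t ω + η • ξ t ω)
    (Vsc Vst : ℝ) (hV : Vst ≤ Vsc) (hVst : 0 < Vst)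
    (hV0 : ∫ ω, ‖θ 0 ω‖ ^ 2 ∂μ ≤ Vsc)
    (hfloor : η * σ ^ 2 / lam ≤ Vst / 2) :
    ∀ T : ℕ, (T : ℝ) ≥ Real.log (2 * Vsc / Vst) / (η * lam) →
      ∫ ω, ‖θ T ω‖ ^ 2 ∂μ ≤ Vst :=
  stmt5_general ℱ θ ξ hθ hθb hξ hξ0 η lam σ hη hlam hηlam hξσ hupd Vsc Vst hV hVst hV0 hfloor
end

section
/- (Layer-wise one-step contraction.) Let θ evolve by θ_{t+1} = (1 − 2ηλ) θ_t − η g_t + η ξ_t, where g : ℕ → Ω → EuclideanSpace ℝ (Fin d) is adapted with, almost surely for all t, ⟨g_t, θ_t⟩ ≥ α κ ‖θ_t‖² and ‖g_t‖ ≤ G ‖θ_t‖ for constants α, κ ≥ 0 and G ≥ 0. Assume ηλ ∈ (0, 1/2], η (λ + 2ακ) ≤ 1, and η (4λ² + 4λακ + G²) ≤ 3λ. Then, setting V_t = ‖θ_t‖², for every t one has E[V_{t+1} ∣ 𝓕_t] ≤ (1 − ηλ − 2ηακ) V_t + η² σ² almost surely; i.e. the effective contraction rate is γ_eff = ηλ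 + 2ηακ ≥ ηλ. -/
/-!
Write `θ_{t+1} = Y + η ξ_t` with `Y = (1 - 2ηλ) θ_t - η g_t`, which is `𝓕_t`-measurable and
bounded. Pulling `Y` out of the conditional expectation kills the cross term `⟪Y, ξ_t⟫`, so
`E[‖θ_{t+1}‖² ∣ 𝓕_t] = ‖Y‖² + η² E[‖ξ_t‖² ∣ 𝓕_t]`. Expanding `‖Y‖²` with the alignment and growth
bounds gives the coefficient `(1 - 2ηλ)² - 2(1 - 2ηλ)ηακ + η²G²`, which is at most
`1 - ηλ - 2ηακ` precisely when `η²(4λ² + 4λακ + G²) ≤ 3ηλ`.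
-/

open MeasureTheory RealInnerProductSpace

section Deterministic

variable {E : Type*} [NormedAddCommGroup E] [InnerProductSpace ℝ E]

lemma norm_smul_sub_smul_le {x g : E} {C G : ℝ} (a η : ℝ) (hx : ‖x‖ ≤ C)
    (hg : ‖g‖ ≤ G * ‖x‖) : ‖a • x - η • g‖ ≤ (|a| + |η| * |G|) * C := by
  have hgC : ‖g‖ ≤ |G| * C :=
    hg.trans <| (mul_le_mul_of_nonneg_right (le_abs_self G) (norm_nonneg x)).trans <|
      mul_le_mul_of_nonneg_left hx (abs_nonneg G)
  calc ‖a • x - η • g‖ ≤ |a| * ‖x‖ + |η| * ‖g‖ := by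
        simpa only [norm_smul, Real.norm_eq_abs] using norm_sub_le (a • x) (η • g)
    _ ≤ |a| * C + |η| * (|G| * C) := by gcongr
    _ = (|a| + |η| * |G|) * C := by ring

lemma norm_smul_sub_smul_sq_le {x g : E} {a η c G : ℝ} (ha : 0 ≤ a) (hη : 0 ≤ η)
    (halign : c * ‖x‖ ^ 2 ≤ ⟪g, x⟫) (hg : ‖g‖ ≤ G * ‖x‖) :
    ‖a • x - η • g‖ ^ 2 ≤ (a ^ 2 - 2 * a * η * c + η ^ 2 * G ^ 2) * ‖x‖ ^ 2 := by
  have hg2 : ‖g‖ ^ 2 ≤ G ^ 2 * ‖x‖ ^ 2 := by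
    rw [← mul_pow]; exact pow_le_pow_left₀ (norm_nonneg g) hg 2
  have hexp : ‖a • x - η • g‖ ^ 2 =
      a ^ 2 * ‖x‖ ^ 2 - 2 * a * η * ⟪g, x⟫ + η ^ 2 * ‖g‖ ^ 2 := by
    rw [norm_sub_sq_real, real_inner_smul_left, real_inner_smul_right, norm_smul, norm_smul,
      Real.norm_eq_abs, Real.norm_eq_abs, mul_pow, mul_pow, sq_abs, sq_abs, real_inner_comm]
    ring
  rw [hexp]
  nlinarith [mul_le_mul_of_nonneg_left halign (by positivity : 0 ≤ 2 * a * η),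
    mul_le_mul_of_nonneg_left hg2 (sq_nonneg η)]

lemma norm_weightDecay_step_sq_le {x g : E} {η lam c G : ℝ} (hη : 0 ≤ η)
    (hηlam : η * lam ≤ 1 / 2) (halign : c * ‖x‖ ^ 2 ≤ ⟪g, x⟫) (hg : ‖g‖ ≤ G * ‖x‖)
    (hstep : η * (4 * lam ^ 2 + 4 * lam * c + G ^ 2) ≤ 3 * lam) :
    ‖(1 - 2 * η * lam) • x - η • g‖ ^ 2 ≤ (1 - η * lam - 2 * η * c) * ‖x‖ ^ 2 := by
  refine (norm_smul_sub_smul_sq_le (by linarith) hη halign hg).trans ?_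
  gcongr
  nlinarith [mul_le_mul_of_nonneg_left hstep hη]

end Deterministic

section Stochastic

variable {Ω E : Type*} {m m0 : MeasurableSpace Ω} {μ : Measure Ω}
  [NormedAddCommGroup E] [InnerProductSpace ℝ E]

lemma condExp_norm_smul_sq_ae_eq (c : ℝ) (ξ : Ω → E) :
    μ[fun ω => ‖c • ξ ω‖ ^ 2|m] =ᵐ[μ] fun ω => c ^ 2 * μ[fun ω => ‖ξ ω‖ ^ 2|m] ω := by
  simp_rw [norm_smul, mul_pow, Real.norm_eq_abs, sq_abs]
  exact condExp_smul (c ^ 2) (fun ω => ‖ξ ω‖ ^ 2) m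

variable [IsFiniteMeasure μ] [CompleteSpace E]

lemma condExp_inner_ae_eq_zero (hm : m ≤ m0) {Y ξ : Ω → E} (hY : StronglyMeasurable[m] Y)
    {C : ℝ} (hYC : ∀ᵐ ω ∂μ, ‖Y ω‖ ≤ C) (hξ : Integrable ξ μ) (hξ0 : μ[ξ|m] =ᵐ[μ] 0) :
    μ[fun ω => ⟪Y ω, ξ ω⟫|m] =ᵐ[μ] 0 := by
  filter_upwards [condExp_stronglyMeasurable_bilin_of_bound (innerSL ℝ) hm hY hξ C hYC, hξ0]
    with ω hω hω0
  exact hω.trans (by simp [hω0])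

lemma condExp_norm_add_sq_ae_eq (hm : m ≤ m0) {Y ξ : Ω → E} (hY : StronglyMeasurable[m] Y)
    {C : ℝ} (hYC : ∀ᵐ ω ∂μ, ‖Y ω‖ ≤ C) (hξ : MemLp ξ 2 μ) (hξ0 : μ[ξ|m] =ᵐ[μ] 0) :
    μ[fun ω => ‖Y ω + ξ ω‖ ^ 2|m] =ᵐ[μ] fun ω => ‖Y ω‖ ^ 2 + μ[fun ω => ‖ξ ω‖ ^ 2|m] ω := by
  have hξi : Integrable ξ μ := hξ.integrable one_le_two
  have hY2 : StronglyMeasurable[m] fun ω => ‖Y ω‖ ^ 2 := hY.norm.pow 2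
  have hY2i : Integrable (fun ω => ‖Y ω‖ ^ 2) μ := by
    refine Integrable.of_bound (hY2.mono hm).aestronglyMeasurable (C ^ 2) ?_
    filter_upwards [hYC] with ω hω
    simpa using pow_le_pow_left₀ (norm_nonneg _) hω 2
  have hcross : Integrable (fun ω => 2 * ⟪Y ω, ξ ω⟫) μ :=
    ((innerSL ℝ).integrable_of_bilin_of_bdd_left C (hY.mono hm).aestronglyMeasurable hYC
      hξi).const_mul 2
  have hξ2 : Integrable (fun ω => ‖ξ ω‖ ^ 2) μ := hξ.integrable_norm_pow two_ne_zero
  have hexpand : (fun ω => ‖Y ω + ξ ω‖ ^ 2) =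
      (fun ω => ‖Y ω‖ ^ 2) + (fun ω => 2 * ⟪Y ω, ξ ω⟫) + fun ω => ‖ξ ω‖ ^ 2 := by
    ext ω; exact norm_add_sq_real (Y ω) (ξ ω)
  have hcross0 : μ[fun ω => 2 * ⟪Y ω, ξ ω⟫|m] =ᵐ[μ] 0 := by
    change μ[(2 : ℝ) • fun ω => ⟪Y ω, ξ ω⟫|m] =ᵐ[μ] 0
    filter_upwards [condExp_smul (2 : ℝ) (fun ω => ⟪Y ω, ξ ω⟫) m,
      condExp_inner_ae_eq_zero hm hY hYC hξi hξ0] with ω h h0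
    rw [h, Pi.smul_apply, h0, Pi.zero_apply, smul_zero]
  rw [hexpand]
  filter_upwards [condExp_add (hY2i.add hcross) hξ2 m, condExp_add hY2i hcross m, hcross0]
    with ω h1 h2 h3
  rw [h1, Pi.add_apply, h2, Pi.add_apply, h3, condExp_of_stronglyMeasurable hm hY2 hY2i]
  simp

end Stochastic

theorem stmt13_general {Ω : Type*} {m0 : MeasurableSpace Ω} {μ : Measure Ω} [IsProbabilityMeasure μ]
    (ℱ : Filtration ℕ m0) {d : ℕ}
    (θ ξ g : ℕ → Ω → EuclideanSpace ℝ (Fin d))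
    (hθ : StronglyAdapted ℱ θ) (hθb : ∀ t, ∃ C : ℝ, ∀ ω, ‖θ t ω‖ ≤ C)
    (hg : StronglyAdapted ℱ g)
    (hξ : ∀ t, MemLp (ξ t) 2 μ) (hξ0 : ∀ t, μ[ξ t | ℱ t] =ᵐ[μ] 0)
    (η lam σ α κ G : ℝ) (hη : 0 < η)
    (hξσ : ∀ t, ∀ᵐ ω ∂μ, (μ[(fun ω => ‖ξ t ω‖ ^ 2) | ℱ t]) ω ≤ σ ^ 2)
    (hgalign : ∀ t, ∀ᵐ ω ∂μ, α * κ * ‖θ t ω‖ ^ 2 ≤ ⟪g t ω, θ t ω⟫)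
    (hgbound : ∀ t, ∀ᵐ ω ∂μ, ‖g t ω‖ ≤ G * ‖θ t ω‖)
    (hηlam : 0 < η * lam ∧ η * lam ≤ 1 / 2)
    (hstep2 : η * (4 * lam ^ 2 + 4 * lam * α * κ + G ^ 2) ≤ 3 * lam)
    (hupd : ∀ t, θ (t + 1) =
      fun ω => (1 - 2 * η * lam) • θ t ω - η • g t ω + η • ξ t ω) :
    ∀ t, ∀ᵐ ω ∂μ, (μ[(fun ω => ‖θ (t + 1) ω‖ ^ 2) | ℱ t]) ω ≤
      (1 - η * lam - 2 * η * α * κ) * ‖θ t ω‖ ^ 2 + η ^ 2 * σ ^ 2 := by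
  intro t
  rw [hupd t]
  obtain ⟨C, hC⟩ := hθb t
  set Y := fun ω => (1 - 2 * η * lam) • θ t ω - η • g t ω
  have hY : StronglyMeasurable[ℱ t] Y :=
    ((hθ t).const_smul (1 - 2 * η * lam)).sub ((hg t).const_smul η)
  have hYC : ∀ᵐ ω ∂μ, ‖Y ω‖ ≤ (|1 - 2 * η * lam| + |η| * |G|) * C := by
    filter_upwards [hgbound t] with ω hω using norm_smul_sub_smul_le _ _ (hC ω) hω
  have hηξ0 : μ[fun ω => η • ξ t ω | ℱ t] =ᵐ[μ] 0 := by
    filter_upwards [condExp_smul η (ξ t) (ℱ t), hξ0 t] with ω h h0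
    rw [← Pi.smul_def, h, Pi.smul_apply, h0, Pi.zero_apply, smul_zero]
  filter_upwards [condExp_norm_add_sq_ae_eq (ξ := fun ω => η • ξ t ω) (ℱ.le t) hY hYC
      ((hξ t).const_smul η) hηξ0, condExp_norm_smul_sq_ae_eq (m := ℱ t) η (ξ t), hξσ t,
      hgalign t, hgbound t]
    with ω hsplit hnoise hσω halign hbound
  have hdrift := norm_weightDecay_step_sq_le (c := α * κ) hη.le hηlam.2 halign hbound
    (by simpa only [mul_assoc] using hstep2)
  rw [hsplit, hnoise]
  calc ‖Y ω‖ ^ 2 + η ^ 2 * μ[fun ω => ‖ξ t ω‖ ^ 2|ℱ t] ω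
      ≤ (1 - η * lam - 2 * η * (α * κ)) * ‖θ t ω‖ ^ 2 + η ^ 2 * σ ^ 2 := by
        gcongr
    _ = (1 - η * lam - 2 * η * α * κ) * ‖θ t ω‖ ^ 2 + η ^ 2 * σ ^ 2 := by ring

/-- Layer-wise one-step contraction: under the update
`θ_{t+1} = (1 − 2ηλ) θ_t − η g_t + η ξ_t` with gradient alignment `⟪g_t, θ_t⟫ ≥ ακ‖θ_t‖²`
and growth bound `‖g_t‖ ≤ G‖θ_t‖`, and step-size conditions `ηλ ∈ (0,1/2]`,
`η(λ + 2ακ) ≤ 1`, `η(4λ² + 4λακ + G²) ≤ 3λ`, one has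
`E[V_{t+1} ∣ 𝓕_t] ≤ (1 − ηλ − 2ηακ) V_t + η²σ²` a.s., where `V_t = ‖θ_t‖²`. -/
theorem stmt13 {Ω : Type*} {m0 : MeasurableSpace Ω} {μ : Measure Ω} [IsProbabilityMeasure μ]
    (ℱ : Filtration ℕ m0) {d : ℕ}
    (θ ξ g : ℕ → Ω → EuclideanSpace ℝ (Fin d))
    (hθ : StronglyAdapted ℱ θ) (hθb : ∀ t, ∃ C : ℝ, ∀ ω, ‖θ t ω‖ ≤ C)
    (hg : StronglyAdapted ℱ g)
    (hξ : ∀ t, MemLp (ξ t) 2 μ) (hξ0 : ∀ t, μ[ξ t | ℱ t] =ᵐ[μ] 0)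
    (η lam σ α κ G : ℝ) (hη : 0 < η) (hlam : 0 < lam) (hσ : 0 ≤ σ)
    (hα : 0 ≤ α) (hκ : 0 ≤ κ) (hG : 0 ≤ G)
    (hξσ : ∀ t, ∀ᵐ ω ∂μ, (μ[(fun ω => ‖ξ t ω‖ ^ 2) | ℱ t]) ω ≤ σ ^ 2)
    (hgalign : ∀ t, ∀ᵐ ω ∂μ, α * κ * ‖θ t ω‖ ^ 2 ≤ ⟪g t ω, θ t ω⟫)
    (hgbound : ∀ t, ∀ᵐ ω ∂μ, ‖g t ω‖ ≤ G * ‖θ t ω‖)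
    (hηlam : 0 < η * lam ∧ η * lam ≤ 1 / 2)
    (hstep1 : η * (lam + 2 * α * κ) ≤ 1)
    (hstep2 : η * (4 * lam ^ 2 + 4 * lam * α * κ + G ^ 2) ≤ 3 * lam)
    (hupd : ∀ t, θ (t + 1) =
      fun ω => (1 - 2 * η * lam) • θ t ω - η • g t ω + η • ξ t ω) :
    ∀ t, ∀ᵐ ω ∂μ, (μ[(fun ω => ‖θ (t + 1) ω‖ ^ 2) | ℱ t]) ω ≤
      (1 - η * lam - 2 * η * α * κ) * ‖θ t ω‖ ^ 2 + η ^ 2 * σ ^ 2 :=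
  stmt13_general ℱ θ ξ g hθ hθb hg hξ hξ0 η lam σ α κ G hη hξσ hgalign hgbound hηlam hstep2 hupd
end
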